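/- Let X be an irreducible topological space whose topology is Noetherian (every descending chain of closed subsets stabilizes). Let {C_i}_{i∈I} be an infinite family of pairwise distinct closed subsets of X, each of which is a maximal element of the set of proper closed irreducible subsets of X (ordered by inclusion). Then the union ⋃_{i∈I} C_i is dense in X. -/

import Mathlib

/-! A closed subset `Y` of a Noetherian space is a finite union of closed irreducible sets. A set
maximal among closed irreducible subsets of `Y` lies in one of them, hence equals it, so there are
only finitely many such sets; if `Y` is proper, this includes every maximal proper closed
irreducible set contained in `Y`. Thus, if the union of infinitely many distinct ones were
not dense, its closure would be a proper closed set containing all of them. -/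

open Set

namespace TopologicalSpace.NoetherianSpace

theorem finite_setOf_maximal_isClosed_isIrreducible_subset {X : Type*} [TopologicalSpace X]
    [NoetherianSpace X] {Y : Set X} (hY : IsClosed Y) :
    {C | Maximal (fun S : Set X => IsClosed S ∧ IsIrreducible S ∧ S ⊆ Y) C}.Finite := by
  obtain ⟨T, hTfin, hTclosed, hTirr, rfl⟩ := exists_finite_set_isClosed_irreducible hY
  refine hTfin.subset fun C hC => ?_
  rw [mem_ofPred_eq] at hC
  lift T to Finset (Set X) using hTfin
  obtain ⟨t, htT, hCt⟩ :=
    isIrreducible_iff_sUnion_isClosed.mp hC.prop.2.1 T hTclosed hC.prop.2.2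
  rwa [hC.eq_of_subset ⟨hTclosed t htT, hTirr t htT, subset_sUnion_of_mem htT⟩ hCt]

end TopologicalSpace.NoetherianSpace

theorem dense_iUnion_of_maximal_proper_closed_irreducible_general {X : Type*} [TopologicalSpace X]
    [TopologicalSpace.NoetherianSpace X]
    {I : Type*} [Infinite I] (C : I → Set X) (hinj : Function.Injective C)
    (hmax : ∀ i, Maximal (fun S : Set X => IsClosed S ∧ IsIrreducible S ∧ S ≠ Set.univ) (C i)) :
    Dense (⋃ i, C i) := by
  by_contra hdense
  set Y := closure (⋃ i, C i)
  have hY : Y ≠ univ := fun h => hdense (dense_iff_closure_eq.mpr h)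
  have hCY (i : I) : C i ⊆ Y := (subset_iUnion C i).trans subset_closure
  have hmaxY (i : I) :
      Maximal (fun S : Set X => IsClosed S ∧ IsIrreducible S ∧ S ⊆ Y) (C i) :=
    (hmax i).mono (fun S hS => ⟨hS.1, hS.2.1, fun h => hY (univ_subset_iff.mp (h ▸ hS.2.2))⟩)
      ⟨(hmax i).prop.1, (hmax i).prop.2.1, hCY i⟩
  exact (infinite_range_of_injective hinj)
    ((TopologicalSpace.NoetherianSpace.finite_setOf_maximal_isClosed_isIrreducible_subset
      isClosed_closure).subset (range_subset_iff.mpr hmaxY))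

/-- Let `X` be an irreducible Noetherian topological space and `(C i)` an infinite family of
pairwise distinct closed subsets, each of which is maximal among proper closed irreducible
subsets of `X`. Then `⋃ i, C i` is dense in `X`. -/
theorem dense_iUnion_of_maximal_proper_closed_irreducible {X : Type*} [TopologicalSpace X]
    [TopologicalSpace.NoetherianSpace X] [IrreducibleSpace X]
    {I : Type*} [Infinite I] (C : I → Set X) (hinj : Function.Injective C)
    (hmax : ∀ i, Maximal (fun S : Set X => IsClosed S ∧ IsIrreducible S ∧ S ≠ Set.univ) (C i)) :
    Dense (⋃ i, C i) :=
  dense_iUnion_of_maximal_proper_closed_irreducible_general C hinj hmax
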